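/- arXiv:2601.21668 — 6 statements merged into one kernel-verified Lean document; each statement's English description precedes it below -/
import Mathlib

section
/- Let τ > 0 and let E₀, E₁ : ℝ → ℝ be differentiable functions. Then the backward Störmer–Verlet step Ψ : ℝ × ℝ → ℝ × ℝ is differentiable at every point, and the determinant of its Fréchet derivative equals 1 at every point of ℝ × ℝ. -/
/-- The backward Störmer–Verlet step for the Vlasov–Poisson characteristics. -/
noncomputable def svStep (τ : ℝ) (E0 E1 : ℝ → ℝ) : ℝ × ℝ → ℝ × ℝ :=
  fun p =>
    let vhalf := p.2 + (τ / 2) * E1 p.1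
    let x1 := p.1 - τ * vhalf
    (x1, vhalf + (τ / 2) * E0 x1)

/-!
The step is a kick `v ↦ v + (τ/2) E₁(x)`, a drift `x ↦ x - τ v` and a kick `v ↦ v + (τ/2) E₀(x)`.
Each factor is a shear whose derivative is a transvection of `ℝ × ℝ`, hence has determinant 1,
and determinants multiply along the chain rule.
-/

theorem ContinuousLinearMap.det_comp {R M : Type*} [CommRing R] [TopologicalSpace M]
    [AddCommGroup M] [Module R M] (f g : M →L[R] M) : (f ∘L g).det = f.det * g.det :=
  LinearMap.det_comp _ _

namespace StormerVerlet

open ContinuousLinearMap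

section Shear

variable {R : Type*} [CommRing R] [TopologicalSpace R] [IsTopologicalRing R]

def shearSnd (c : R) : R × R →L[R] R × R :=
  (fst R R R).prod (snd R R R + c • fst R R R)

def shearFst (c : R) : R × R →L[R] R × R :=
  (fst R R R + c • snd R R R).prod (snd R R R)

theorem shearSnd_eq_transvection (c : R) :
    (shearSnd c : R × R →ₗ[R] R × R) =
      LinearMap.transvection (c • LinearMap.fst R R R) (0, 1) := by
  ext <;> simp [shearSnd, LinearMap.transvection.apply]

theorem shearFst_eq_transvection (c : R) :
    (shearFst c : R × R →ₗ[R] R × R) =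
      LinearMap.transvection (c • LinearMap.snd R R R) (1, 0) := by
  ext <;> simp [shearFst, LinearMap.transvection.apply]

theorem det_shearSnd (c : R) : (shearSnd c).det = 1 := by
  simp [ContinuousLinearMap.det, shearSnd_eq_transvection]

theorem det_shearFst (c : R) : (shearFst c).det = 1 := by
  simp [ContinuousLinearMap.det, shearFst_eq_transvection]

end Shear

section Flow

variable {𝕜 : Type*} [NontriviallyNormedField 𝕜]

def kick (g : 𝕜 → 𝕜) (p : 𝕜 × 𝕜) : 𝕜 × 𝕜 := (p.1, p.2 + g p.1)

def drift (τ : 𝕜) (p : 𝕜 × 𝕜) : 𝕜 × 𝕜 := (p.1 - τ * p.2, p.2)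

theorem hasFDerivAt_kick {g : 𝕜 → 𝕜} {g' : 𝕜} {p : 𝕜 × 𝕜} (hg : HasDerivAt g g' p.1) :
    HasFDerivAt (kick g) (shearSnd g') p :=
  hasFDerivAt_fst.prodMk (hasFDerivAt_snd.add (hg.comp_hasFDerivAt p hasFDerivAt_fst))

theorem hasFDerivAt_drift (τ : 𝕜) (p : 𝕜 × 𝕜) : HasFDerivAt (drift τ) (shearFst (-τ)) p := by
  have : drift τ = shearFst (-τ) := by
    ext q <;> simp [drift, shearFst, sub_eq_add_neg]
  rw [this]
  exact (shearFst (-τ)).hasFDerivAt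

end Flow

theorem svStep_eq_kick_comp_drift_comp_kick (τ : ℝ) (E0 E1 : ℝ → ℝ) :
    svStep τ E0 E1 = kick (fun x => τ / 2 * E0 x) ∘ drift τ ∘ kick (fun x => τ / 2 * E1 x) :=
  rfl

theorem hasFDerivAt_svStep {τ : ℝ} {E0 E1 : ℝ → ℝ} {p : ℝ × ℝ} {e0 e1 : ℝ}
    (hE0 : HasDerivAt E0 e0 (svStep τ E0 E1 p).1) (hE1 : HasDerivAt E1 e1 p.1) :
    HasFDerivAt (svStep τ E0 E1)
      (shearSnd (τ / 2 * e0) ∘L shearFst (-τ) ∘L shearSnd (τ / 2 * e1)) p := by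
  have hKickDrift :=
    (hasFDerivAt_drift τ _).comp p (hasFDerivAt_kick (hE1.const_mul (τ / 2)))
  rw [svStep_eq_kick_comp_drift_comp_kick]
  exact (hasFDerivAt_kick (p := drift τ (kick _ p)) (hE0.const_mul (τ / 2))).comp p hKickDrift

end StormerVerlet

theorem svStep_differentiable_det_one_general (τ : ℝ) (E0 E1 : ℝ → ℝ)
    (hE0 : Differentiable ℝ E0) (hE1 : Differentiable ℝ E1) :
    Differentiable ℝ (svStep τ E0 E1) ∧
    ∀ p : ℝ × ℝ, (fderiv ℝ (svStep τ E0 E1) p).det = 1 := by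
  have hD (p : ℝ × ℝ) :=
    StormerVerlet.hasFDerivAt_svStep (hE0 (svStep τ E0 E1 p).1).hasDerivAt (hE1 p.1).hasDerivAt
  refine ⟨fun p => (hD p).differentiableAt, fun p => ?_⟩
  rw [(hD p).fderiv, ContinuousLinearMap.det_comp, ContinuousLinearMap.det_comp,
    StormerVerlet.det_shearSnd, StormerVerlet.det_shearFst, StormerVerlet.det_shearSnd,
    one_mul, one_mul]

theorem svStep_differentiable_det_one (τ : ℝ) (hτ : 0 < τ) (E0 E1 : ℝ → ℝ)
    (hE0 : Differentiable ℝ E0) (hE1 : Differentiable ℝ E1) :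
    Differentiable ℝ (svStep τ E0 E1) ∧
    ∀ p : ℝ × ℝ, (fderiv ℝ (svStep τ E0 E1) p).det = 1 :=
  svStep_differentiable_det_one_general τ E0 E1 hE0 hE1
end

section
/- Let τ > 0 and let E₀, E₁ : ℝ → ℝ be measurable functions. Then the backward Störmer–Verlet step Ψ : ℝ × ℝ → ℝ × ℝ preserves the Lebesgue (volume) measure on ℝ × ℝ: the pushforward of the volume measure under Ψ equals the volume measure. -/
open MeasureTheory

/-! The step is the composition kick ∘ drift ∘ kick of three shears, each translating one
coordinate by a measurable function of the other; by Fubini a shear preserves the product of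
a translation-invariant measure with any σ-finite measure. -/

section Shear

variable {α G : Type*} [MeasurableSpace α] [MeasurableSpace G] [Add G] [MeasurableAdd₂ G]
  {μ : Measure α} {ν : Measure G} [SFinite μ] [SFinite ν] [ν.IsAddRightInvariant]

theorem measurePreserving_shear_snd {f : α → G} (hf : Measurable f) :
    MeasurePreserving (fun p : α × G => (p.1, p.2 + f p.1)) (μ.prod ν) (μ.prod ν) :=
  (MeasurePreserving.id μ).skew_product (g := fun x v => v + f x)
    (measurable_snd.add (hf.comp measurable_fst))
    (ae_of_all _ fun x => (measurePreserving_add_right ν (f x)).map_eq)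

theorem measurePreserving_shear_fst {f : α → G} (hf : Measurable f) :
    MeasurePreserving (fun p : G × α => (p.1 + f p.2, p.2)) (ν.prod μ) (ν.prod μ) :=
  (Measure.measurePreserving_swap.comp (measurePreserving_shear_snd hf)).comp
    Measure.measurePreserving_swap

end Shear

theorem svStep_eq_comp (τ : ℝ) (E0 E1 : ℝ → ℝ) :
    svStep τ E0 E1 =
      (fun p : ℝ × ℝ => (p.1, p.2 + τ / 2 * E0 p.1)) ∘
        (fun p : ℝ × ℝ => (p.1 + -τ * p.2, p.2)) ∘
          (fun p : ℝ × ℝ => (p.1, p.2 + τ / 2 * E1 p.1)) := by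
  funext p
  simp only [svStep, Function.comp_apply, neg_mul, ← sub_eq_add_neg]

theorem svStep_measurePreserving_general (τ : ℝ) (E0 E1 : ℝ → ℝ)
    (hE0 : Measurable E0) (hE1 : Measurable E1) :
    MeasurePreserving (svStep τ E0 E1)
      (volume : Measure (ℝ × ℝ)) (volume : Measure (ℝ × ℝ)) := by
  rw [Measure.volume_eq_prod, svStep_eq_comp]
  exact (measurePreserving_shear_snd (hE0.const_mul _)).comp <|
    (measurePreserving_shear_fst (measurable_id.const_mul _)).comp
      (measurePreserving_shear_snd (hE1.const_mul _))

theorem svStep_measurePreserving (τ : ℝ) (hτ : 0 < τ) (E0 E1 : ℝ → ℝ)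
    (hE0 : Measurable E0) (hE1 : Measurable E1) :
    MeasurePreserving (svStep τ E0 E1)
      (volume : Measure (ℝ × ℝ)) (volume : Measure (ℝ × ℝ)) :=
  svStep_measurePreserving_general τ E0 E1 hE0 hE1
end

section
/- Let τ > 0, let N be a natural number, and for k = 1,…,N let E_k⁰, E_k¹ : ℝ → ℝ be differentiable functions. Let Ψ_N = Ψ⁽¹⁾ ∘ ⋯ ∘ Ψ⁽ᴺ⁾ be the NuFI composite map of the corresponding backward Störmer–Verlet steps. Then Ψ_N is differentiable at every point of ℝ × ℝ and the determinant of its Fréchet derivative equals 1 everywhere (discrete volume preservation of the NuFI flow map). -/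
/-- The NuFI composite map `Ψ_N = Ψ⁽¹⁾ ∘ Ψ⁽²⁾ ∘ ⋯ ∘ Ψ⁽ᴺ⁾`. -/
noncomputable def nufiComp (τ : ℝ) (E0 E1 : ℕ → ℝ → ℝ) : ℕ → (ℝ × ℝ → ℝ × ℝ)
  | 0 => id
  | n + 1 => nufiComp τ E0 E1 n ∘ svStep τ (E0 (n + 1)) (E1 (n + 1))

/-! The step `svStep τ E0 E1` factors as kick ∘ drift ∘ kick, where a kick `(x, v) ↦ (x, v + f x)`
and a drift `(x, v) ↦ (x - τ v, v)` are shears whose Jacobian matrices are unipotent triangular.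
Maps with unit Jacobian determinant are closed under composition by multiplicativity of the
determinant and the chain rule, so every `Ψ_N` has unit Jacobian determinant. -/

open ContinuousLinearMap

theorem ContinuousLinearMap.det_prod_eq {R : Type*} [CommRing R] [TopologicalSpace R]
    (L : R × R →L[R] R × R) :
    L.det = (L (1, 0)).1 * (L (0, 1)).2 - (L (0, 1)).1 * (L (1, 0)).2 := by
  rw [det, ← LinearMap.det_toMatrix (Module.Basis.finTwoProd R), Matrix.det_fin_two]
  simp [LinearMap.toMatrix_apply]

def HasUnitJacobian (𝕜 : Type*) {E : Type*} [NontriviallyNormedField 𝕜] [NormedAddCommGroup E]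
    [NormedSpace 𝕜 E] (f : E → E) : Prop :=
  Differentiable 𝕜 f ∧ ∀ p, (fderiv 𝕜 f p).det = 1

namespace HasUnitJacobian

variable {𝕜 E : Type*} [NontriviallyNormedField 𝕜] [NormedAddCommGroup E] [NormedSpace 𝕜 E]

theorem id : HasUnitJacobian 𝕜 (id : E → E) := by
  refine ⟨differentiable_id, fun p => ?_⟩
  rw [fderiv_id, det, coe_id, LinearMap.det_id]

theorem comp {f g : E → E} (hf : HasUnitJacobian 𝕜 f) (hg : HasUnitJacobian 𝕜 g) :
    HasUnitJacobian 𝕜 (f ∘ g) := by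
  refine ⟨hf.1.comp hg.1, fun p => ?_⟩
  rw [fderiv_comp p (hf.1 _) (hg.1 p), det, toLinearMap_comp, LinearMap.det_comp]
  exact (congrArg₂ (· * ·) (hf.2 (g p)) (hg.2 p)).trans (mul_one 1)

end HasUnitJacobian

def kick (f : ℝ → ℝ) (p : ℝ × ℝ) : ℝ × ℝ := (p.1, p.2 + f p.1)

def drift (τ : ℝ) : ℝ × ℝ →L[ℝ] ℝ × ℝ := (fst ℝ ℝ ℝ - τ • snd ℝ ℝ ℝ).prod (snd ℝ ℝ ℝ)

theorem svStep_eq_kick_comp_drift_comp_kick (τ : ℝ) (E0 E1 : ℝ → ℝ) :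
    svStep τ E0 E1 = kick (fun x => τ / 2 * E0 x) ∘ drift τ ∘ kick (fun x => τ / 2 * E1 x) :=
  rfl

theorem hasFDerivAt_kick {f : ℝ → ℝ} {f' : ℝ} {p : ℝ × ℝ} (hf : HasDerivAt f f' p.1) :
    HasFDerivAt (kick f) ((fst ℝ ℝ ℝ).prod (snd ℝ ℝ ℝ + f' • fst ℝ ℝ ℝ)) p :=
  hasFDerivAt_fst.prodMk (hasFDerivAt_snd.add (hf.comp_hasFDerivAt p hasFDerivAt_fst))

theorem hasUnitJacobian_kick {f : ℝ → ℝ} (hf : Differentiable ℝ f) :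
    HasUnitJacobian ℝ (kick f) := by
  refine ⟨fun p => (hasFDerivAt_kick (hf p.1).hasDerivAt).differentiableAt, fun p => ?_⟩
  rw [(hasFDerivAt_kick (hf p.1).hasDerivAt).fderiv, det_prod_eq]
  simp

theorem hasUnitJacobian_drift (τ : ℝ) : HasUnitJacobian ℝ (drift τ) := by
  refine ⟨(drift τ).differentiable, fun p => ?_⟩
  rw [(drift τ).fderiv, det_prod_eq]
  simp [drift]

theorem hasUnitJacobian_svStep (τ : ℝ) {E0 E1 : ℝ → ℝ} (hE0 : Differentiable ℝ E0)
    (hE1 : Differentiable ℝ E1) : HasUnitJacobian ℝ (svStep τ E0 E1) := by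
  rw [svStep_eq_kick_comp_drift_comp_kick]
  exact (hasUnitJacobian_kick (hE0.const_mul _)).comp
    ((hasUnitJacobian_drift τ).comp (hasUnitJacobian_kick (hE1.const_mul _)))

theorem nufiComp_differentiable_det_one_general (τ : ℝ) (N : ℕ)
    (E0 E1 : ℕ → ℝ → ℝ)
    (hE0 : ∀ k, 1 ≤ k → k ≤ N → Differentiable ℝ (E0 k))
    (hE1 : ∀ k, 1 ≤ k → k ≤ N → Differentiable ℝ (E1 k)) :
    Differentiable ℝ (nufiComp τ E0 E1 N) ∧
    ∀ p : ℝ × ℝ, (fderiv ℝ (nufiComp τ E0 E1 N) p).det = 1 := by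
  show HasUnitJacobian ℝ (nufiComp τ E0 E1 N)
  induction N with
  | zero => exact HasUnitJacobian.id
  | succ n ih =>
    have hprefix := ih (fun k h1 h2 => hE0 k h1 (by omega)) (fun k h1 h2 => hE1 k h1 (by omega))
    exact hprefix.comp (hasUnitJacobian_svStep τ (hE0 _ (by omega) le_rfl) (hE1 _ (by omega) le_rfl))

theorem nufiComp_differentiable_det_one (τ : ℝ) (hτ : 0 < τ) (N : ℕ)
    (E0 E1 : ℕ → ℝ → ℝ)
    (hE0 : ∀ k, 1 ≤ k → k ≤ N → Differentiable ℝ (E0 k))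
    (hE1 : ∀ k, 1 ≤ k → k ≤ N → Differentiable ℝ (E1 k)) :
    Differentiable ℝ (nufiComp τ E0 E1 N) ∧
    ∀ p : ℝ × ℝ, (fderiv ℝ (nufiComp τ E0 E1 N) p).det = 1 :=
  nufiComp_differentiable_det_one_general τ N E0 E1 hE0 hE1
end

section
/- Let τ > 0, N a natural number, and for k = 1,…,N let E_k⁰, E_k¹ : ℝ → ℝ be continuous functions; let Ψ_N be the NuFI composite map of the corresponding backward Störmer–Verlet steps. Let f₀ : ℝ × ℝ → ℝ be measurable and g : ℝ → ℝ be measurable such that g ∘ f₀ is integrable with respect to the volume measure on ℝ × ℝ. Then ∫∫ g(f₀(Ψ_N(x,v))) dx dv = ∫∫ g(f₀(x,v)) dx dv (Liouville's theorem for the NuFI discrete solution). -/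
open MeasureTheory

lemma shear_v_mp (b : ℝ → ℝ) (hb : Measurable b) :
    MeasurePreserving (fun p : ℝ × ℝ => (p.1, p.2 + b p.1))
      (volume : Measure (ℝ × ℝ)) volume := by
  rw [Measure.volume_eq_prod]
  exact (MeasurePreserving.id volume).skew_product (g := fun x y => y + b x)
    (measurable_snd.add (hb.comp measurable_fst))
    (Filter.Eventually.of_forall fun x => map_add_right_eq_self volume (b x))

lemma shear_x_mp (c : ℝ) :
    MeasurePreserving (fun p : ℝ × ℝ => (p.1 + c * p.2, p.2))
      (volume : Measure (ℝ × ℝ)) volume := by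
  have hs : MeasurePreserving (Prod.swap : ℝ × ℝ → ℝ × ℝ)
      (volume : Measure (ℝ × ℝ)) volume := by
    rw [Measure.volume_eq_prod]; exact Measure.measurePreserving_swap
  have h := (shear_v_mp (fun v => c * v) (measurable_const.mul measurable_id)).comp hs
  have h2 := hs.comp h
  have heq : (Prod.swap ∘ (fun p : ℝ × ℝ => (p.1, p.2 + c * p.1)) ∘ Prod.swap)
      = fun p : ℝ × ℝ => (p.1 + c * p.2, p.2) := by
    funext p
    simp [Prod.swap, add_comm, mul_comm]
  rwa [heq] at h2

lemma svStep_mp (τ : ℝ) (E0 E1 : ℝ → ℝ) (h0 : Measurable E0) (h1 : Measurable E1) :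
    MeasurePreserving (svStep τ E0 E1) (volume : Measure (ℝ × ℝ)) volume := by
  have hS1 := shear_v_mp (fun x => (τ / 2) * E1 x) (measurable_const.mul h1)
  have hS2 := shear_x_mp (-τ)
  have hS3 := shear_v_mp (fun x => (τ / 2) * E0 x) (measurable_const.mul h0)
  have h := hS3.comp (hS2.comp hS1)
  have heq : ((fun p : ℝ × ℝ => (p.1, p.2 + τ / 2 * E0 p.1)) ∘
      (fun p : ℝ × ℝ => (p.1 + -τ * p.2, p.2)) ∘
      (fun p : ℝ × ℝ => (p.1, p.2 + τ / 2 * E1 p.1))) = svStep τ E0 E1 := by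
    funext p
    simp only [svStep, Function.comp_apply, neg_mul, ← sub_eq_add_neg]
  rwa [heq] at h

lemma nufiComp_mp (τ : ℝ) (E0 E1 : ℕ → ℝ → ℝ) (N : ℕ)
    (hE0 : ∀ k, 1 ≤ k → k ≤ N → Measurable (E0 k))
    (hE1 : ∀ k, 1 ≤ k → k ≤ N → Measurable (E1 k)) :
    MeasurePreserving (nufiComp τ E0 E1 N) (volume : Measure (ℝ × ℝ)) volume := by
  induction N with
  | zero => exact MeasurePreserving.id volume
  | succ n ih =>
    exact (ih (fun k h1 h2 => hE0 k h1 (h2.trans n.le_succ))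
        (fun k h1 h2 => hE1 k h1 (h2.trans n.le_succ))).comp
      (svStep_mp τ _ _ (hE0 (n+1) (Nat.succ_le_succ n.zero_le) le_rfl)
        (hE1 (n+1) (Nat.succ_le_succ n.zero_le) le_rfl))

/-- Liouville's theorem for the NuFI discrete solution. -/
theorem nufi_liouville (τ : ℝ) (hτ : 0 < τ) (N : ℕ) (E0 E1 : ℕ → ℝ → ℝ)
    (hE0 : ∀ k, 1 ≤ k → k ≤ N → Continuous (E0 k))
    (hE1 : ∀ k, 1 ≤ k → k ≤ N → Continuous (E1 k))
    (f₀ : ℝ × ℝ → ℝ) (hf₀ : Measurable f₀) (g : ℝ → ℝ) (hg : Measurable g)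
    (hint : Integrable (fun p : ℝ × ℝ => g (f₀ p)) (volume : Measure (ℝ × ℝ))) :
    ∫ p : ℝ × ℝ, g (f₀ (nufiComp τ E0 E1 N p)) = ∫ p : ℝ × ℝ, g (f₀ p) := by
  have hmp := nufiComp_mp τ E0 E1 N (fun k h1 h2 => (hE0 k h1 h2).measurable)
    (fun k h1 h2 => (hE1 k h1 h2).measurable)
  have h := integral_map (f := fun q => g (f₀ q)) hmp.measurable.aemeasurable
    (((hg.comp hf₀).aestronglyMeasurable).mono_ac hmp.map_eq.absolutelyContinuous)
  rw [hmp.map_eq] at h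
  exact h.symm
end

section
/- Let a < b be reals, let n be a natural number, let x₀, …, x_n be n+1 distinct points in [a,b], and let f : ℝ → ℝ be (n+1)-times differentiable on [a,b] with |f^{(n+1)}(ξ)| ≤ M for all ξ ∈ [a,b]. Let P be the Lagrange interpolation polynomial of degree at most n satisfying P(xᵢ) = f(xᵢ) for i = 0,…,n. Then for every x ∈ [a,b], |f(x) − P(x)| ≤ (M / (n+1)!) · ∏_{i=0}^{n} |x − xᵢ|. -/
/-!
If `y` is not a node, add to `P` the multiple `c * ∏ i, (X - x i)` of the nodal polynomial that
makes `q = P + c * ∏ i, (X - x i)` agree with `f` at `y` as well. Then `f - q` vanishes at `n + 2`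
points of `[a, b]`, so by Rolle's theorem applied `n + 1` times its `(n + 1)`-st derivative vanishes
at some `ξ`, i.e. `f⁽ⁿ⁺¹⁾ ξ = (n + 1)! * c`. This is the Cauchy form of the interpolation error,
and the bound follows from `|f⁽ⁿ⁺¹⁾| ≤ M`.
-/

open Set Polynomial

theorem Polynomial.iterate_derivative_eq_C_of_natDegree_le {R : Type*} [Semiring R]
    {p : R[X]} {m : ℕ} (h : p.natDegree ≤ m) :
    derivative^[m] p = C (m.factorial * p.coeff m) := by
  have hdeg : (derivative^[m] p).natDegree = 0 := by
    have := natDegree_iterate_derivative p m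
    omega
  rw [eq_C_of_natDegree_eq_zero hdeg, coeff_iterate_derivative, zero_add,
    Nat.descFactorial_self, nsmul_eq_mul]

/- Unlike `iteratedDerivWithin_sub`, this needs no `ContDiffWithinAt 𝕜 m f`: only the lower
derivatives of `f` are differentiated. -/
theorem iteratedDerivWithin_sub_eval_eqOn {𝕜 : Type*} [NontriviallyNormedField 𝕜]
    {s : Set 𝕜} (hs : UniqueDiffOn 𝕜 s) {f : 𝕜 → 𝕜} (p : 𝕜[X]) {m : ℕ}
    (hf : ∀ k < m, DifferentiableOn 𝕜 (iteratedDerivWithin k f s) s) :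
    EqOn (iteratedDerivWithin m (fun t ↦ f t - p.eval t) s)
      (fun t ↦ iteratedDerivWithin m f s t - (derivative^[m] p).eval t) s := by
  induction m with
  | zero => intro t _; simp
  | succ m ih =>
    intro t ht
    have ih := ih fun k hk ↦ hf k (by omega)
    rw [iteratedDerivWithin_succ, derivWithin_congr ih (ih ht),
      derivWithin_fun_sub (hf m m.lt_succ_self t ht)
        (derivative^[m] p).differentiable.differentiableAt.differentiableWithinAt,
      (derivative^[m] p).derivWithin (hs t ht), ← iteratedDerivWithin_succ,
      Function.iterate_succ_apply']

theorem exists_strictMono_deriv_eq_zero {m : ℕ} {x : Fin (m + 2) → ℝ} (hx : StrictMono x)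
    {g : ℝ → ℝ} (hg : ContinuousOn g (Icc (x 0) (x (Fin.last _)))) (hzero : ∀ i, g (x i) = 0) :
    ∃ c : Fin (m + 1) → ℝ, StrictMono c ∧
      (∀ i, c i ∈ Ioo (x i.castSucc) (x i.succ)) ∧ ∀ i, deriv g (c i) = 0 := by
  have hrolle (i : Fin (m + 1)) : ∃ c ∈ Ioo (x i.castSucc) (x i.succ), deriv g c = 0 :=
    exists_deriv_eq_zero (hx i.castSucc_lt_succ)
      (hg.mono (Icc_subset_Icc (hx.monotone (Fin.zero_le _)) (hx.monotone (Fin.le_last _))))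
      ((hzero _).trans (hzero _).symm)
  choose c hc hderiv using hrolle
  refine ⟨c, Fin.strictMono_iff_lt_succ.mpr fun i ↦ ?_, hc, hderiv⟩
  calc c i.castSucc < x i.castSucc.succ := (hc _).2
    _ = x i.succ.castSucc := by rw [Fin.succ_castSucc]
    _ < c i.succ := (hc _).1

theorem exists_iteratedDerivWithin_eq_zero {a b : ℝ} {m : ℕ} {x : Fin (m + 1) → ℝ}
    (hx : StrictMono x) (hx_mem : ∀ i, x i ∈ Icc a b) {g : ℝ → ℝ}
    (hg : ∀ k < m, DifferentiableOn ℝ (iteratedDerivWithin k g (Icc a b)) (Icc a b))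
    (hzero : ∀ i, g (x i) = 0) :
    ∃ ξ ∈ Icc a b, iteratedDerivWithin m g (Icc a b) ξ = 0 := by
  induction m generalizing g with
  | zero => exact ⟨x 0, hx_mem 0, by simpa using hzero 0⟩
  | succ m ih =>
    have hcont : ContinuousOn g (Icc a b) := by
      simpa using (hg 0 m.succ_pos).continuousOn
    obtain ⟨c, hc, hc_mem, hc_deriv⟩ := exists_strictMono_deriv_eq_zero hx
      (hcont.mono (Icc_subset_Icc (hx_mem 0).1 (hx_mem _).2)) hzero
    have hc_Ioo (i : Fin (m + 1)) : c i ∈ Ioo a b :=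
      ⟨(hx_mem _).1.trans_lt (hc_mem i).1, (hc_mem i).2.trans_le (hx_mem _).2⟩
    rw [iteratedDerivWithin_succ']
    refine ih hc (fun i ↦ Ioo_subset_Icc_self (hc_Ioo i)) (fun k hk ↦ ?_) fun i ↦ ?_
    · rw [← iteratedDerivWithin_succ']
      exact hg (k + 1) (by omega)
    · rw [derivWithin_of_mem_nhds (Icc_mem_nhds (hc_Ioo i).1 (hc_Ioo i).2)]
      exact hc_deriv i

theorem exists_iteratedDerivWithin_eq_factorial_mul_coeff {a b : ℝ} (hab : a < b) {m : ℕ}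
    {t : Finset ℝ} (ht : ↑t ⊆ Icc a b) (hcard : t.card = m + 1) {f : ℝ → ℝ}
    (hf : ∀ k < m, DifferentiableOn ℝ (iteratedDerivWithin k f (Icc a b)) (Icc a b))
    {q : ℝ[X]} (hq : q.natDegree ≤ m) (hfq : ∀ z ∈ t, f z = q.eval z) :
    ∃ ξ ∈ Icc a b, iteratedDerivWithin m f (Icc a b) ξ = m.factorial * q.coeff m := by
  have hs : UniqueDiffOn ℝ (Icc a b) := uniqueDiffOn_Icc hab
  have hE (k : ℕ) (hk : k < m) :
      DifferentiableOn ℝ (iteratedDerivWithin k (fun z ↦ f z - q.eval z) (Icc a b)) (Icc a b) :=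
    ((hf k hk).sub (derivative^[k] q).differentiable.differentiableOn).congr
      (iteratedDerivWithin_sub_eval_eqOn hs q fun j hj ↦ hf j (by omega))
  have hmem (i : Fin (m + 1)) : t.orderEmbOfFin hcard i ∈ t := t.orderEmbOfFin_mem hcard i
  obtain ⟨ξ, hξ, hzero⟩ := exists_iteratedDerivWithin_eq_zero (t.orderEmbOfFin hcard).strictMono
    (fun i ↦ ht (hmem i)) hE fun i ↦ sub_eq_zero.mpr (hfq _ (hmem i))
  refine ⟨ξ, hξ, ?_⟩
  rw [iteratedDerivWithin_sub_eval_eqOn hs q hf hξ, iterate_derivative_eq_C_of_natDegree_le hq]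
    at hzero
  simpa [sub_eq_zero] using hzero

theorem exists_sub_eval_eq_iteratedDerivWithin_div_factorial_mul_prod {a b : ℝ} (hab : a < b)
    {n : ℕ} {x : Fin (n + 1) → ℝ} (hx_inj : Function.Injective x) (hx_mem : ∀ i, x i ∈ Icc a b)
    {f : ℝ → ℝ} (hf : ∀ k ≤ n, DifferentiableOn ℝ (iteratedDerivWithin k f (Icc a b)) (Icc a b))
    {P : ℝ[X]} (hPdeg : P.natDegree ≤ n) (hPinterp : ∀ i, P.eval (x i) = f (x i))
    {y : ℝ} (hy : y ∈ Icc a b) :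
    ∃ ξ ∈ Icc a b, f y - P.eval y =
      iteratedDerivWithin (n + 1) f (Icc a b) ξ / (n + 1).factorial * ∏ i, (y - x i) := by
  by_cases hy_node : ∃ i, y = x i
  · obtain ⟨i, rfl⟩ := hy_node
    refine ⟨x i, hx_mem i, ?_⟩
    rw [hPinterp, sub_self, Finset.prod_eq_zero (Finset.mem_univ i) (sub_self _), mul_zero]
  push Not at hy_node
  set W := Lagrange.nodal Finset.univ x
  have hW_eval (z : ℝ) : W.eval z = ∏ i, (z - x i) := Lagrange.eval_nodal
  have hW_deg : W.natDegree = n + 1 := by simp [W, Lagrange.natDegree_nodal]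
  have hWy : W.eval y ≠ 0 := by
    rw [hW_eval]
    exact Finset.prod_ne_zero_iff.mpr fun i _ ↦ sub_ne_zero.mpr (hy_node i)
  set c := (f y - P.eval y) / W.eval y
  set q := P + C c * W
  have hq_deg : q.natDegree ≤ n + 1 :=
    (natDegree_add_le _ _).trans <| max_le (by omega) (natDegree_C_mul_le _ _ |>.trans hW_deg.le)
  have hq_coeff : q.coeff (n + 1) = c := by
    have hW_coeff : W.coeff (n + 1) = 1 := hW_deg ▸ Lagrange.nodal_monic.coeff_natDegree
    simp [q, hW_coeff, coeff_eq_zero_of_natDegree_lt (show P.natDegree < n + 1 by omega)]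
  have hfq : ∀ z ∈ insert y (Finset.univ.image x), f z = q.eval z := by
    simp only [Finset.mem_insert, Finset.mem_image, Finset.mem_univ, true_and]
    rintro z (rfl | ⟨i, rfl⟩)
    · simp [q, c, hWy]
    · simp [q, hPinterp, hW_eval, Finset.prod_eq_zero (Finset.mem_univ i)]
  have hcard : (insert y (Finset.univ.image x)).card = n + 1 + 1 := by
    rw [Finset.card_insert_of_notMem (by simpa [eq_comm] using hy_node),
      Finset.card_image_of_injective _ hx_inj, Finset.card_fin]
  have hsub : ↑(insert y (Finset.univ.image x)) ⊆ Icc a b := by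
    simp [Set.insert_subset_iff, hy, Set.range_subset_iff, hx_mem]
  obtain ⟨ξ, hξ, hξ_eq⟩ := exists_iteratedDerivWithin_eq_factorial_mul_coeff hab hsub hcard
    (fun k hk ↦ hf k (by omega)) hq_deg hfq
  refine ⟨ξ, hξ, ?_⟩
  rw [hξ_eq, hq_coeff, ← hW_eval, mul_div_cancel_left₀ _ (by positivity), div_mul_cancel₀ _ hWy]

/-- Classical error bound for Lagrange polynomial interpolation at `n+1` distinct
nodes in `[a,b]`, for an `(n+1)`-times differentiable function with `(n+1)`-st
derivative bounded by `M` on `[a,b]`. -/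
theorem lagrange_interpolation_error
    (a b : ℝ) (hab : a < b) (n : ℕ) (x : Fin (n + 1) → ℝ)
    (hx_inj : Function.Injective x) (hx_mem : ∀ i, x i ∈ Icc a b)
    (f : ℝ → ℝ) (M : ℝ)
    (hdiff : ∀ k ≤ n,
      DifferentiableOn ℝ (iteratedDerivWithin k f (Icc a b)) (Icc a b))
    (hM : ∀ ξ ∈ Icc a b, |iteratedDerivWithin (n + 1) f (Icc a b) ξ| ≤ M)
    (P : Polynomial ℝ) (hPdeg : P.natDegree ≤ n)
    (hPinterp : ∀ i, P.eval (x i) = f (x i)) :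
    ∀ y ∈ Icc a b,
      |f y - P.eval y| ≤ M / (Nat.factorial (n + 1)) * ∏ i, |y - x i| := by
  intro y hy
  obtain ⟨ξ, hξ, herr⟩ := exists_sub_eval_eq_iteratedDerivWithin_div_factorial_mul_prod hab
    hx_inj hx_mem hdiff hPdeg hPinterp hy
  rw [herr, abs_mul, abs_div, Nat.abs_cast, Finset.abs_prod]
  gcongr
  exact hM ξ hξ
end

section
/- Let E : ℝ → ℝ, let t₀ ∈ ℝ and τ > 0, and let x : ℝ → ℝ be four-times differentiable on [t₀, t₀+τ] with x''(t) = E(x(t)) for all t ∈ [t₀, t₀+τ] and |x''''(t)| ≤ M on [t₀, t₀+τ]. Then the velocity update of the Störmer–Verlet step satisfies the local truncation error bound |x'(t₀+τ) − (x'(t₀) + (τ/2)·(E(x(t₀)) + E(x(t₀+τ))))| ≤ M·τ³/12. -/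
open Set intervalIntegral

/-!
The velocity update is the one-panel trapezoidal rule applied to `∫ x''` over `[t₀, t₀ + τ]`,
whose exact value is `x' (t₀ + τ) - x' t₀`; the classical trapezoidal error bound
`(b - a)³ ‖f''‖∞ / 12`, with `f = x''` and hence `f'' = x''''`, gives the claim.
-/

section TrapezoidalRule

variable {F f f' f'' : ℝ → ℝ} {a b M : ℝ}

theorem trapezoidal_error_one_eq_of_hasDerivWithinAt (hab : a ≤ b)
    (hF : ∀ t ∈ Icc a b, HasDerivWithinAt F (f t) (Icc a b) t) (hf : ContinuousOn f (Icc a b)) :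
    trapezoidal_error f 1 a b = (b - a) / 2 * (f a + f b) - (F b - F a) := by
  rw [trapezoidal_error, trapezoidal_integral_one, integral_eq_sub_of_hasDerivAt_of_le hab
    (fun t ht => (hF t ht).continuousWithinAt)
    (fun t ht => (hF t (Ioo_subset_Icc_self ht)).hasDerivAt (Icc_mem_nhds ht.1 ht.2))
    (hf.intervalIntegrable_of_Icc hab)]

theorem abs_trapezoidal_error_one_le_of_hasDerivWithinAt (hab : a < b)
    (hf : ∀ t ∈ Icc a b, HasDerivWithinAt f (f' t) (Icc a b) t)
    (hf' : ∀ t ∈ Icc a b, HasDerivWithinAt f' (f'' t) (Icc a b) t)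
    (hM : ∀ t ∈ Icc a b, |f'' t| ≤ M) :
    |trapezoidal_error f 1 a b| ≤ (b - a) ^ 3 * M / 12 := by
  have hs := uniqueDiffOn_Icc hab
  have hderiv : EqOn (derivWithin f (Icc a b)) f' (Icc a b) := fun t ht =>
    (hf t ht).derivWithin (hs t ht)
  have hderiv2 : EqOn (iteratedDerivWithin 2 f (Icc a b)) f'' (Icc a b) := fun t ht => by
    rw [iteratedDerivWithin_succ, iteratedDerivWithin_one, derivWithin_congr hderiv (hderiv ht)]
    exact (hf' t ht).derivWithin (hs t ht)
  -- Off `[a, b]` the second derivative within `[a, b]` takes the junk value `0`.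
  have hbound (t : ℝ) : |iteratedDerivWithin 2 f (Icc a b) t| ≤ M := by
    by_cases ht : t ∈ Icc a b
    · exact hderiv2 ht ▸ hM t ht
    · rw [iteratedDerivWithin_succ, derivWithin_zero_of_notMem_closure (by rwa [closure_Icc]),
        abs_zero]
      exact (abs_nonneg _).trans (hM a (left_mem_Icc.2 hab.le))
  have hI : uIcc a b = Icc a b := uIcc_of_le hab.le
  have herror := trapezoidal_error_le (N := 1) (hI ▸ fun t ht => (hf t ht).differentiableWithinAt)
    (hI ▸ fun t ht => (hf' t ht).differentiableWithinAt.congr hderiv (hderiv ht))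
    (hI ▸ hbound) one_pos
  simpa [abs_of_pos (sub_pos.2 hab)] using herror

end TrapezoidalRule

theorem stormer_verlet_velocity_truncation_error_general
    (E : ℝ → ℝ) (t₀ τ : ℝ) (hτ : 0 < τ)
    (x x' x'' x''' x'''' : ℝ → ℝ) (M : ℝ)
    (hx'' : ∀ t ∈ Icc t₀ (t₀ + τ), HasDerivWithinAt x' (x'' t) (Icc t₀ (t₀ + τ)) t)
    (hx''' : ∀ t ∈ Icc t₀ (t₀ + τ), HasDerivWithinAt x'' (x''' t) (Icc t₀ (t₀ + τ)) t)
    (hx'''' : ∀ t ∈ Icc t₀ (t₀ + τ), HasDerivWithinAt x''' (x'''' t) (Icc t₀ (t₀ + τ)) t)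
    (hE : ∀ t ∈ Icc t₀ (t₀ + τ), x'' t = E (x t))
    (hM : ∀ t ∈ Icc t₀ (t₀ + τ), |x'''' t| ≤ M) :
    |x' (t₀ + τ) - (x' t₀ + τ / 2 * (E (x t₀) + E (x (t₀ + τ))))| ≤ M * τ ^ 3 / 12 := by
  have hlt : t₀ < t₀ + τ := lt_add_of_pos_right t₀ hτ
  have hcont : ContinuousOn x'' (Icc t₀ (t₀ + τ)) := fun t ht => (hx''' t ht).continuousWithinAt
  have herror := abs_trapezoidal_error_one_le_of_hasDerivWithinAt hlt hx''' hx'''' hM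
  rw [trapezoidal_error_one_eq_of_hasDerivWithinAt hlt.le hx'' hcont] at herror
  rw [← hE t₀ (left_mem_Icc.2 hlt.le), ← hE (t₀ + τ) (right_mem_Icc.2 hlt.le), ← abs_neg]
  convert herror using 2 <;> ring

/-- Local truncation error of the Störmer–Verlet velocity update: if
`x'' = E ∘ x` on `[t₀, t₀+τ]` and `|x''''| ≤ M` there, then the trapezoidal velocity
update `x' t₀ + (τ/2)(E (x t₀) + E (x (t₀+τ)))` approximates `x' (t₀+τ)` up to
`M τ³ / 12`. -/
theorem stormer_verlet_velocity_truncation_error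
    (E : ℝ → ℝ) (t₀ τ : ℝ) (hτ : 0 < τ)
    (x x' x'' x''' x'''' : ℝ → ℝ) (M : ℝ)
    (hx' : ∀ t ∈ Icc t₀ (t₀ + τ), HasDerivWithinAt x (x' t) (Icc t₀ (t₀ + τ)) t)
    (hx'' : ∀ t ∈ Icc t₀ (t₀ + τ), HasDerivWithinAt x' (x'' t) (Icc t₀ (t₀ + τ)) t)
    (hx''' : ∀ t ∈ Icc t₀ (t₀ + τ), HasDerivWithinAt x'' (x''' t) (Icc t₀ (t₀ + τ)) t)
    (hx'''' : ∀ t ∈ Icc t₀ (t₀ + τ), HasDerivWithinAt x''' (x'''' t) (Icc t₀ (t₀ + τ)) t)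
    (hE : ∀ t ∈ Icc t₀ (t₀ + τ), x'' t = E (x t))
    (hM : ∀ t ∈ Icc t₀ (t₀ + τ), |x'''' t| ≤ M) :
    |x' (t₀ + τ) - (x' t₀ + τ / 2 * (E (x t₀) + E (x (t₀ + τ))))| ≤ M * τ ^ 3 / 12 :=
  stormer_verlet_velocity_truncation_error_general E t₀ τ hτ x x' x'' x''' x'''' M hx'' hx''' hx''''
    hE hM
end
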